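/- Let H be a vector subspace of ℝⁿ such that H + ℤⁿ is dense in ℝⁿ. If A is an n×n matrix with rational coefficients preserving a direct sum decomposition ℝⁿ = H ⊕ V and whose restriction to H is the identity, then A is the identity matrix. -/

import Mathlib

/-! Clearing denominators, `d • (A - 1)` is an integer matrix `C` for some integer `d ≠ 0`.
Each row of `C` is a linear functional that vanishes on `H` and sends `ℤⁿ` into `ℤ`, so it sends
`H + ℤⁿ` into the closed set `ℤ`. By density it then sends all of `ℝⁿ` into `ℤ`, and a real
linear functional with values in `ℤ` is zero. -/

open Pointwise Set Matrix

lemma eq_zero_of_forall_mul_mem_range_intCast {a : ℝ}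
    (h : ∀ t : ℝ, t * a ∈ range ((↑) : ℤ → ℝ)) : a = 0 := by
  by_contra ha
  obtain ⟨m, hm⟩ := h (2 * a)⁻¹
  have : m * 2 = 1 := by exact_mod_cast (show (m : ℝ) * 2 = 1 by rw [hm]; field_simp)
  omega

lemma ContinuousLinearMap.eq_zero_of_dense_of_mapsTo_range_intCast {E : Type*}
    [TopologicalSpace E] [AddCommGroup E] [Module ℝ E] (f : E →L[ℝ] ℝ) {s : Set E}
    (hs : Dense s) (hf : MapsTo f s (range ((↑) : ℤ → ℝ))) : f = 0 := by
  have hall : ∀ x, f x ∈ range ((↑) : ℤ → ℝ) := fun x => by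
    have := hf.closure f.continuous (hs x)
    rwa [Int.isClosedEmbedding_coe_real.isClosed_range.closure_eq] at this
  ext x
  exact eq_zero_of_forall_mul_mem_range_intCast fun t => by
    simpa only [map_smul, smul_eq_mul] using hall (t • x)

lemma Matrix.exists_smul_eq_map_intCast {m n : Type*} [Finite m] [Finite n]
    {A : Matrix m n ℝ} (hrat : ∀ i j, ∃ q : ℚ, A i j = q) :
    ∃ d : ℤ, d ≠ 0 ∧ ∃ C : Matrix m n ℤ, d • A = C.map (↑) := by
  choose q hq using hrat
  obtain ⟨⟨d, hd⟩, hC⟩ := IsLocalization.exist_integer_multiples_of_finite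
    (nonZeroDivisors ℤ) (fun ij : m × n => q ij.1 ij.2)
  choose C hC using hC
  simp only [Prod.forall, algebraMap_int_eq, eq_intCast, zsmul_eq_mul] at hC
  refine ⟨d, nonZeroDivisors.ne_zero hd, of fun i j => C (i, j), ?_⟩
  ext i j
  rw [smul_apply, hq, map_apply, of_apply, ← Rat.cast_intCast (C (i, j)), hC, zsmul_eq_mul]
  push_cast
  rfl

lemma Matrix.eq_zero_of_mulVec_eq_zero_of_dense_add_intPoints {m ι : Type*} [Fintype ι]
    (H : Submodule ℝ (ι → ℝ))
    (hdense : Dense ((H : Set (ι → ℝ)) + range (fun z : ι → ℤ => fun i => (z i : ℝ))))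
    (C : Matrix m ι ℤ) (hCH : ∀ x ∈ H, C.map (↑) *ᵥ x = 0) : C = 0 := by
  classical
  ext i j
  set φ : (ι → ℝ) →L[ℝ] ℝ :=
    LinearMap.toContinuousLinearMap (LinearMap.proj i ∘ₗ (C.map ((↑) : ℤ → ℝ)).mulVecLin)
  have hφ : φ = 0 := by
    refine φ.eq_zero_of_dense_of_mapsTo_range_intCast hdense ?_
    rintro - ⟨x, hx, -, ⟨z, rfl⟩, rfl⟩
    refine ⟨(C *ᵥ z) i, ?_⟩
    simp only [φ, LinearMap.coe_toContinuousLinearMap', LinearMap.comp_apply, mulVecLin_apply,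
      mulVec_add, hCH x hx, zero_add, LinearMap.proj_apply]
    exact RingHom.map_mulVec (Int.castRingHom ℝ) C z i
  simpa [φ, mulVec_single] using congrArg (· (Pi.single j 1)) hφ

theorem stmt0_general (n : ℕ) (H : Submodule ℝ (Fin n → ℝ))
    (hdense : Dense ((H : Set (Fin n → ℝ)) +
      Set.range (fun z : Fin n → ℤ => fun i => (z i : ℝ))))
    (A : Matrix (Fin n) (Fin n) ℝ)
    (hrat : ∀ i j, ∃ q : ℚ, A i j = (q : ℝ))
    (hid : ∀ x ∈ H, A.mulVec x = x) :
    A = 1 := by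
  have hrat_sub_one : ∀ i j, ∃ q : ℚ, (A - 1) i j = q := fun i j => by
    obtain ⟨q, hq⟩ := hrat i j
    refine ⟨q - (1 : Matrix (Fin n) (Fin n) ℚ) i j, ?_⟩
    rw [Matrix.sub_apply, hq, one_apply, one_apply]
    split_ifs <;> simp
  obtain ⟨d, hd, C, hC⟩ := exists_smul_eq_map_intCast hrat_sub_one
  have hCH : ∀ x ∈ H, C.map (↑) *ᵥ x = 0 := fun x hx => by
    rw [← hC, smul_mulVec, sub_mulVec, hid x hx, one_mulVec, sub_self, smul_zero]
  obtain rfl := eq_zero_of_mulVec_eq_zero_of_dense_add_intPoints H hdense C hCH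
  rw [Matrix.map_zero _ Int.cast_zero, ← Int.cast_smul_eq_zsmul ℝ, smul_eq_zero, sub_eq_zero] at hC
  exact hC.resolve_left (by exact_mod_cast hd)

/-- Let `H` be a subspace of `ℝⁿ` such that `H + ℤⁿ` is dense in `ℝⁿ`.
If `A` is an `n × n` matrix with rational coefficients preserving a direct sum
decomposition `ℝⁿ = H ⊕ V` and whose restriction to `H` is the identity, then
`A` is the identity matrix. -/
theorem stmt0 (n : ℕ) (H V : Submodule ℝ (Fin n → ℝ))
    (hcompl : IsCompl H V)
    (hdense : Dense ((H : Set (Fin n → ℝ)) +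
      Set.range (fun z : Fin n → ℤ => fun i => (z i : ℝ))))
    (A : Matrix (Fin n) (Fin n) ℝ)
    (hrat : ∀ i j, ∃ q : ℚ, A i j = (q : ℝ))
    (hAH : ∀ x ∈ H, A.mulVec x ∈ H)
    (hAV : ∀ x ∈ V, A.mulVec x ∈ V)
    (hid : ∀ x ∈ H, A.mulVec x = x) :
    A = 1 :=
  stmt0_general n H hdense A hrat hid
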